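/- Comparison with the adjacency list: for every rooted plane tree T with n(T) = n ≥ 4 nodes, the TreeExplorer representation of the corresponding labeled tree, which uses |TE(T)| + n·⌈log₂ n⌉ bits (the structure code followed by the n node labels of ⌈log₂ n⌉ bits each), is strictly shorter than the adjacency-list representation, which uses 2n·⌈log₂ n⌉ bits. -/

import Mathlib

/-- A rooted plane tree: a root node together with a finite ordered list of
subtrees, the subtrees rooted at the children of the root. -/
inductive PTree : Type
  | node : List PTree → PTree

namespace PTree

/-- The subtrees rooted at the children of the root. -/
def children : PTree → List PTree
  | node ts => ts

mutual
/-- Number of nodes of a rooted plane tree. -/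
def numNodes : PTree → ℕ
  | node ts => 1 + numNodesList ts
def numNodesList : List PTree → ℕ
  | [] => 0
  | t :: ts => numNodes t + numNodesList ts
end

mutual
/-- Number of leaves (nodes with no children); a single-node tree has one leaf. -/
def numLeaves : PTree → ℕ
  | node [] => 1
  | node (t :: ts) => numLeaves t + numLeavesList ts
def numLeavesList : List PTree → ℕ
  | [] => 0
  | t :: ts => numLeaves t + numLeavesList ts
end

/-- Symbols of the ternary pit-climbing code: ↓, ↑, ⇑. -/
inductive PCSym : Type
  | down   -- ↓ : fall to the leftmost unexplored leaf
  | up     -- ↑ : climb to a never-before-visited node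
  | upSeen -- ⇑ : climb to an already-visited node
deriving DecidableEq

mutual
/-- Ternary pit-climbing code TPC: empty for a single node; `TPC t ++ [↑]` for a
single child subtree `t`; `TPC t₁ ++ [↑,↓] ++ TPC t₂ ++ [⇑,↓] ++ ⋯ ++ [⇑,↓] ++ TPC tₖ ++ [⇑]`
for children subtrees `t₁, …, tₖ`, `k ≥ 2`. -/
def TPC : PTree → List PCSym
  | node [] => []
  | node [t] => TPC t ++ [.up]
  | node (t₁ :: t₂ :: ts) => TPC t₁ ++ [.up, .down] ++ TPCRest (t₂ :: ts)
/-- TPC contribution of the second-onwards children subtrees. -/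
def TPCRest : List PTree → List PCSym
  | [] => []
  | [t] => TPC t ++ [.upSeen]
  | t :: ts => TPC t ++ [.upSeen, .down] ++ TPCRest ts
end

/-- Binary encoding of the pit-climbing symbols: ↓ ↦ 0, ⇑ ↦ 00, ↑ ↦ 1. -/
def pcBits : PCSym → List Bool
  | .down => [false]
  | .upSeen => [false, false]
  | .up => [true]

/-- Binary pit-climbing code PC. -/
def PC (T : PTree) : List Bool := (TPC T).flatMap pcBits

lemma numNodesList_append (a b : List PTree) :
    numNodesList (a ++ b) = numNodesList a + numNodesList b := by
  induction a with
  | nil => simp [numNodesList]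
  | cons t ts ih => simp [numNodesList, ih]; ring

lemma numNodesList_children_flatten (l : List PTree) :
    numNodesList ((l.map children).flatten) + l.length = numNodesList l := by
  induction l with
  | nil => simp [numNodesList]
  | cons t ts ih =>
      cases t with
      | node cs =>
        simp only [List.map_cons, List.flatten_cons, numNodesList_append,
          List.length_cons, numNodesList, children, numNodes]
        omega

/-- Breadth-first list of the sibling groups of a tree, starting from the list
`gs` of sibling groups at the current level: the groups of the current level
followed by the groups of children on the levels below, level by level and
left to right within each level. -/
def bfsGroups (gs : List (List PTree)) : List (List PTree) :=
  if h : gs.flatten.isEmpty then []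
  else gs ++ bfsGroups (gs.flatten.map children)
termination_by numNodesList gs.flatten
decreasing_by
  have h1 := numNodesList_children_flatten gs.flatten
  have h2 : gs.flatten.length ≠ 0 := by
    intro hh
    rw [List.length_eq_zero_iff] at hh
    exact h (List.isEmpty_iff.mpr hh)
  omega

/-- Symbols of the ternary tunnel-digging code: ←, →, ⇒. -/
inductive TDSym : Type
  | leaf   -- ← : a leaf node
  | inner  -- → : a node with at least one child
  | tunnel -- ⇒ : transition between consecutive non-sibling nodes
deriving DecidableEq

/-- The symbols written for one sibling group: ← for each leaf, → for each
node with at least one child. -/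
def groupSyms (g : List PTree) : List TDSym :=
  g.map (fun t => if t.children.isEmpty then .leaf else .inner)

/-- Ternary tunnel-digging code TTD: the non-root nodes in breadth-first order
(by increasing depth, left to right within each depth), ← for each leaf and →
for each internal node, with ⇒ inserted between every two consecutive
non-sibling nodes. -/
def TTD (T : PTree) : List TDSym :=
  List.intercalate [TDSym.tunnel]
    (((bfsGroups [T.children]).filter (fun g => ¬ g.isEmpty)).map groupSyms)

/-- Binary encoding of the tunnel-digging symbols: ⇒ ↦ 0, → ↦ 00, ← ↦ 1. -/
def tdBits : TDSym → List Bool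
  | .tunnel => [false]
  | .inner => [false, false]
  | .leaf => [true]

/-- Binary tunnel-digging code TD. -/
def TD (T : PTree) : List Bool := (TTD T).flatMap tdBits

/-- TreeExplorer code TE: `0·PC(T)` if `l(T) < n(T)/2`, and `1·TD(T)` otherwise. -/
def TE (T : PTree) : List Bool :=
  if 2 * numLeaves T < numNodes T then false :: PC T else true :: TD T

end PTree

/-!
Counting symbols gives `|PC(T)| = n + 2l - 3`: one `↑` per internal node, and one `↓` and one
`⇑` for each leaf but the first. Likewise `|TD(T)| = 3n - 2l - 3`: one or two bits per non-root
node according to whether it is a leaf, plus a tunnel bit between consecutive nonempty sibling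
groups, of which there is one per internal node. TreeExplorer uses `PC` exactly when `2l < n`,
so `|TE(T)| ≤ 2n - 2 < 2n ≤ n⌈log₂ n⌉` once `n ≥ 4`.
-/

namespace List

variable {α β : Type*}

theorem flatMap_intercalate_singleton (f : α → List β) (s : α) :
    ∀ L : List (List α), (intercalate [s] L).flatMap f = intercalate (f s) (L.map (flatMap f))
  | [] => rfl
  | [_] => by simp
  | g :: g' :: L => by
    simp [intercalate_cons_cons, flatMap_intercalate_singleton f s (g' :: L)]

theorem length_intercalate_add_of_ne_nil (sep : List α) :
    ∀ {L : List (List α)}, L ≠ [] →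
      (intercalate sep L).length + sep.length = (L.map (·.length + sep.length)).sum
  | [g], _ => by simp
  | g :: g' :: L, _ => by
    have ih := length_intercalate_add_of_ne_nil sep (L := g' :: L) (by simp)
    simp only [intercalate_cons_cons, length_append, map_cons, sum_cons] at ih ⊢
    omega

end List

namespace PTree

theorem length_PC (T : PTree) : (PC T).length + 3 = numNodes T + 2 * numLeaves T := by
  apply TPC.induct (motive_1 := fun t => (PC t).length + 3 = numNodes t + 2 * numLeaves t)
    (motive_2 := fun ts => ts ≠ [] →
      ((TPCRest ts).flatMap pcBits).length + 1 = numNodesList ts + 2 * numLeavesList ts)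
  · simp [PC, TPC, numNodes, numNodesList, numLeaves]
  · intro t ih
    simp [PC, TPC, numNodes, numNodesList, numLeaves, numLeavesList, pcBits] at *
    omega
  · intro t₁ t₂ ts ih₁ ih₂
    have := ih₂ (List.cons_ne_nil _ _)
    simp [PC, TPC, numNodes, numNodesList, numLeaves, numLeavesList, pcBits] at *
    omega
  · intro h
    exact absurd rfl h
  · intro t ih _
    simp [PC, TPCRest, numNodesList, numLeavesList, pcBits] at *
    omega
  · intro t ts hts ih₁ ih₂ _
    have := ih₂ hts
    obtain ⟨t', ts', rfl⟩ := List.exists_cons_of_ne_nil hts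
    simp [PC, TPCRest, numNodesList, numLeavesList, pcBits] at *
    omega

abbrev isLeaf (t : PTree) : Bool := t.children.isEmpty

theorem numLeavesList_append (a b : List PTree) :
    numLeavesList (a ++ b) = numLeavesList a + numLeavesList b := by
  induction a with
  | nil => simp [numLeavesList]
  | cons t ts ih => simp [numLeavesList, ih, Nat.add_assoc]

theorem numLeaves_eq_ite_isLeaf_add (t : PTree) :
    numLeaves t = (if isLeaf t then 1 else 0) + numLeavesList t.children := by
  rcases t with ⟨_ | ⟨c, cs⟩⟩ <;> simp [numLeaves, numLeavesList, children]

theorem numLeavesList_eq_countP_isLeaf_add (l : List PTree) :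
    numLeavesList l = l.countP isLeaf + numLeavesList (l.map children).flatten := by
  induction l with
  | nil => simp [numLeavesList]
  | cons t ts ih =>
    rw [numLeavesList, numLeaves_eq_ite_isLeaf_add, ih, List.countP_cons, List.map_cons,
      List.flatten_cons, numLeavesList_append]
    omega

theorem countP_children_ne_nil_add_countP_isLeaf (l : List PTree) :
    (l.map children).countP (fun g => ¬ g.isEmpty) + l.countP isLeaf = l.length := by
  rw [List.countP_map, List.length_eq_countP_add_countP isLeaf, Nat.add_comm]
  rfl

def groupBits (g : List PTree) : List Bool := (groupSyms g).flatMap tdBits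

theorem length_groupBits_add_countP_isLeaf (g : List PTree) :
    (groupBits g).length + g.countP isLeaf = 2 * g.length := by
  induction g with
  | nil => rfl
  | cons t g ih =>
    simp only [groupBits, groupSyms, List.map_cons, List.flatMap_cons, List.length_append,
      List.countP_cons, List.length_cons] at ih ⊢
    split <;> simp_all [tdBits] <;> omega

/-- One more than the length of the tunnel-digging code of the sibling groups `L`: each
nonempty group pays for its own bits and for the tunnel bit that follows it. -/
def tdCost (L : List (List PTree)) : ℕ :=
  ((L.filter (fun g => ¬ g.isEmpty)).map fun g => (groupBits g).length + 1).sum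

theorem tdCost_append (A B : List (List PTree)) : tdCost (A ++ B) = tdCost A + tdCost B := by
  simp [tdCost]

theorem tdCost_singleton_add_countP_isLeaf (g : List PTree) :
    tdCost [g] + g.countP isLeaf = 2 * g.length + if ¬ g.isEmpty then 1 else 0 := by
  have := length_groupBits_add_countP_isLeaf g
  rcases g with _ | ⟨t, g⟩
  · rfl
  · simp only [tdCost, List.filter_singleton, List.isEmpty_cons] at this ⊢
    simp only [Bool.false_eq_true, not_false_eq_true, decide_true, cond_true, List.map_cons,
      List.map_nil, List.sum_cons, List.sum_nil, if_true]
    omega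

theorem tdCost_add_countP_isLeaf (gs : List (List PTree)) :
    tdCost gs + gs.flatten.countP isLeaf =
      2 * gs.flatten.length + gs.countP (fun g => ¬ g.isEmpty) := by
  induction gs with
  | nil => rfl
  | cons g gs ih =>
    have := tdCost_singleton_add_countP_isLeaf g
    rw [← List.singleton_append, tdCost_append, List.singleton_append, List.flatten_cons,
      List.countP_append, List.length_append, List.countP_cons]
    simp only [decide_eq_true_eq] at this ⊢
    omega

theorem tdCost_bfsGroups (gs : List (List PTree)) :
    tdCost (bfsGroups gs) + 2 * numLeavesList gs.flatten =
      3 * numNodesList gs.flatten + gs.countP (fun g => ¬ g.isEmpty) := by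
  induction gs using bfsGroups.induct with
  | case1 gs h =>
    have hflat : gs.flatten = [] := List.isEmpty_iff.mp h
    have hgs : gs.countP (fun g => ¬ g.isEmpty) = 0 :=
      List.countP_eq_zero.mpr fun g hg => by simp [List.flatten_eq_nil_iff.mp hflat g hg]
    rw [bfsGroups, dif_pos h, hflat, hgs]
    rfl
  | case2 gs h ih =>
    rw [bfsGroups, dif_neg h, tdCost_append]
    have hlevel := tdCost_add_countP_isLeaf gs
    have hgroups := countP_children_ne_nil_add_countP_isLeaf gs.flatten
    have hleaves := numLeavesList_eq_countP_isLeaf_add gs.flatten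
    have hnodes := numNodesList_children_flatten gs.flatten
    omega

theorem length_TD_add_one (T : PTree) (h : T.children ≠ []) :
    (TD T).length + 1 = tdCost (bfsGroups [T.children]) := by
  have hbfs : bfsGroups [T.children] = [T.children] ++ bfsGroups (T.children.map children) := by
    rw [bfsGroups, dif_neg (by simpa using h)]
    simp
  have hne : ((bfsGroups [T.children]).filter (fun g => ¬ g.isEmpty)).map groupBits ≠ [] := by
    simp [hbfs, h]
  have := List.length_intercalate_add_of_ne_nil (tdBits .tunnel) hne
  rw [List.map_map] at this
  rw [TD, TTD, List.flatMap_intercalate_singleton, List.map_map]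
  exact this

theorem length_TD (T : PTree) (h : T.children ≠ []) :
    (TD T).length + 2 * numLeaves T + 3 = 3 * numNodes T := by
  obtain ⟨cs⟩ := T
  have hcs : cs ≠ [] := h
  have hTD : (TD (node cs)).length + 1 = tdCost (bfsGroups [cs]) := length_TD_add_one _ h
  have hcost : tdCost (bfsGroups [cs]) + 2 * numLeavesList cs = 3 * numNodesList cs + 1 := by
    simpa [hcs] using tdCost_bfsGroups [cs]
  have hl : numLeaves (node cs) = numLeavesList cs := by
    simpa [children, hcs] using numLeaves_eq_ite_isLeaf_add (node cs)
  rw [numNodes]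
  omega

theorem length_TE_add_two_le (T : PTree) (h : T.children ≠ []) :
    (TE T).length + 2 ≤ 2 * numNodes T := by
  have hPC := length_PC T
  have hTD := length_TD T h
  unfold TE
  split <;> simp only [List.length_cons] <;> omega

theorem children_ne_nil_of_two_le_numNodes {T : PTree} (h : 2 ≤ numNodes T) :
    T.children ≠ [] := by
  rintro hT
  obtain ⟨cs⟩ := T
  subst hT
  simp [numNodes, numNodesList] at h

end PTree

theorem Nat.two_le_clog_two {n : ℕ} (hn : 4 ≤ n) : 2 ≤ Nat.clog 2 n :=
  (Nat.clog_pow 2 2 (by norm_num)).symm.le.trans (Nat.clog_mono_right 2 hn)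

open PTree in
/-- **Comparison with the adjacency list.** For every rooted plane tree `T`
with `n ≥ 4` nodes, the TreeExplorer representation of the corresponding
labeled tree, which uses `|TE(T)| + n⌈log₂ n⌉` bits, is strictly shorter than
the adjacency-list representation, which uses `2n⌈log₂ n⌉` bits. -/
theorem treeExplorer_beats_adjacency_list (T : PTree) (hn : 4 ≤ numNodes T) :
    (TE T).length + numNodes T * Nat.clog 2 (numNodes T)
      < 2 * numNodes T * Nat.clog 2 (numNodes T) := by
  have hTE := length_TE_add_two_le T (children_ne_nil_of_two_le_numNodes (by omega))
  have hlog : numNodes T * 2 ≤ numNodes T * Nat.clog 2 (numNodes T) :=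
    Nat.mul_le_mul_left _ (Nat.two_le_clog_two hn)
  rw [Nat.mul_assoc, Nat.two_mul]
  omega
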